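/- arXiv:1212.1251 — 2 statements merged into one kernel-verified Lean document; each statement's English description precedes it below -/
import Mathlib

section
/- Let 𝒫' refine 𝒫 and let coarse and fine finite DTMDPs over 𝒫 and 𝒫' with reward structures satisfy the refinement correspondence. Fix a uniformisation rate q > 0, time bound t ≥ 0 and k ∈ ℕ, and let q'^c and q'^f denote the maximising value-iteration vectors of the coarse and fine DTMDPs respectively (both with the same q, t, k and their own rewards). Then for every i with 0 ≤ i ≤ k+1 and all blocks z ∈ 𝒫, z' ∈ 𝒫' with z' ⊆ z, one has q'^c_i(z) ≥ q'^f_i(z'). -/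
open scoped BigOperators

namespace TR

variable {S A : Type} [Fintype S] [Fintype A] [DecidableEq S] [DecidableEq A]

/-- Poisson probabilities `φ_λ(i) = λ^i/i! · e^{−λ}`. -/
noncomputable def phi (lam : ℝ) (i : ℕ) : ℝ :=
  lam ^ i / (Nat.factorial i : ℝ) * Real.exp (-lam)

/-- `ψ_λ(i) = 1 − Σ_{j=0}^{i} φ_λ(j)`. -/
noncomputable def psi (lam : ℝ) (i : ℕ) : ℝ :=
  1 - ∑ j ∈ Finset.range (i + 1), phi lam j

/-- Action `a` is enabled in state `s`. -/
def Enabled (P : S → A → S → ℝ) (s : S) (a : A) : Prop :=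
  ∑ s', P s a s' = 1

/-- `P` is the transition function of a finite DTMDP. -/
def IsDTMDP (P : S → A → S → ℝ) : Prop :=
  (∀ s a s', 0 ≤ P s a s') ∧
  (∀ s a, (∑ s', P s a s') = 0 ∨ (∑ s', P s a s') = 1) ∧
  (∀ s, ∃ a, Enabled P s a)

/-- History-dependent randomised scheduler.  A history is encoded as a pair of
a list of (state, action) pairs (most recent first) and the current state. -/
def IsHR (P : S → A → S → ℝ) (sch : List (S × A) × S → A → ℝ) : Prop :=
  (∀ h a, 0 ≤ sch h a) ∧ (∀ h, ∑ a, sch h a = 1) ∧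
  (∀ h a, 0 < sch h a → Enabled P h.2 a)

/-- Probability of the path recorded in the given history (of length `n`,
starting at `s0`) under the HR scheduler `sch`. -/
noncomputable def hrHistProb (P : S → A → S → ℝ) (sch : List (S × A) × S → A → ℝ)
    (s0 : S) : ℕ → List (S × A) × S → ℝ
  | 0, h => if h.1 = [] ∧ h.2 = s0 then 1 else 0
  | _ + 1, ([], _) => 0
  | n + 1, ((s, a) :: rest, s') =>
      hrHistProb P sch s0 n (rest, s) * sch (rest, s) a * P s a s'

/-- Transient probability `tprob^σ(s0, n, s)`: total probability of all paths of
length `n` from `s0` ending in `s`. -/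
noncomputable def hrProb (P : S → A → S → ℝ) (sch : List (S × A) × S → A → ℝ)
    (s0 : S) (n : ℕ) (s : S) : ℝ :=
  ∑' l : List (S × A), hrHistProb P sch s0 n (l, s)

/-- Counting randomised scheduler. -/
def IsCR (P : S → A → S → ℝ) (sch : S → ℕ → A → ℝ) : Prop :=
  (∀ s n a, 0 ≤ sch s n a) ∧ (∀ s n, ∑ a, sch s n a = 1) ∧
  (∀ s n a, 0 < sch s n a → Enabled P s a)

/-- Transient distribution of a CR scheduler. -/
noncomputable def crProb (P : S → A → S → ℝ) (sch : S → ℕ → A → ℝ) (s0 : S) :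
    ℕ → S → ℝ
  | 0 => fun s => if s = s0 then 1 else 0
  | n + 1 => fun s' => ∑ s, crProb P sch s0 n s * ∑ a, sch s n a * P s a s'

/-- Counting deterministic scheduler. -/
def IsCD (P : S → A → S → ℝ) (d : S → ℕ → A) : Prop :=
  ∀ s n, Enabled P s (d s n)

/-- Transient distribution of a CD scheduler. -/
noncomputable def cdProb (P : S → A → S → ℝ) (d : S → ℕ → A) (s0 : S) :
    ℕ → S → ℝ
  | 0 => fun s => if s = s0 then 1 else 0
  | n + 1 => fun s' => ∑ s, cdProb P d s0 n s * P s (d s n) s'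

/-- The value `V = Σ_i [ φ_{qt}(i)·Σ_s p_i(s)·f(s) + ψ_{qt}(i)·Σ_s p_i(s)·c(s)/q ]`
of transient distributions `p` w.r.t. uniformisation rate `q`, time bound `t`
and rewards `(c, f)`. -/
noncomputable def value (q t : ℝ) (c f : S → ℝ) (p : ℕ → S → ℝ) : ℝ :=
  ∑' i : ℕ, (phi (q * t) i * ∑ s, p i s * f s
    + psi (q * t) i * ∑ s, p i s * (c s / q))

/-- Value-iteration vectors of a CR scheduler: `crVI … k j` is `q_{k+1-j}`,
i.e. `crVI … k 0 = q_{k+1} ≡ 0` and `crVI … k (k+1) = q_0`. -/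
noncomputable def crVI (P : S → A → S → ℝ) (sch : S → ℕ → A → ℝ)
    (q t : ℝ) (c f : S → ℝ) (k : ℕ) : ℕ → S → ℝ
  | 0 => fun _ => 0
  | j + 1 => fun s =>
      (∑ a, sch s (k - j) a * ∑ s', P s a s' * crVI P sch q t c f k j s')
      + phi (q * t) (k - j) * f s + psi (q * t) (k - j) * (c s / q)

/-- Maximising value-iteration vectors: `maxVI … k j` is `q'_{k+1-j}`,
i.e. `maxVI … k 0 = q'_{k+1} ≡ 0` and `maxVI … k (k+1) = q'_0`. -/
noncomputable def maxVI (P : S → A → S → ℝ)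
    (q t : ℝ) (c f : S → ℝ) (k : ℕ) : ℕ → S → ℝ
  | 0 => fun _ => 0
  | j + 1 => fun s =>
      sSup {x : ℝ | ∃ a, Enabled P s a ∧
        x = ∑ s', P s a s' * maxVI P q t c f k j s'}
      + phi (q * t) (k - j) * f s + psi (q * t) (k - j) * (c s / q)

/-- Maximum of a real-valued function on a finite nonempty type. -/
noncomputable def maxOf [Nonempty S] (g : S → ℝ) : ℝ :=
  Finset.univ.sup' Finset.univ_nonempty g

/-- `k` is `ε`-sufficient: `Σ_{n=0}^{k} ψ_{qt}(n) > qt − ε·q/(2·max_s c(s))`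
(dropped if `max_s c(s) = 0`) and `ψ_{qt}(k)·max_s f(s) < ε/2`. -/
def EpsSufficient [Nonempty S] (q t : ℝ) (c f : S → ℝ) (ε : ℝ) (k : ℕ) : Prop :=
  (maxOf c = 0 ∨
    (∑ n ∈ Finset.range (k + 1), psi (q * t) n) > q * t - ε * q / (2 * maxOf c)) ∧
  psi (q * t) k * maxOf f < ε / 2

/-- `n`-step transition probabilities (matrix powers) of a stochastic matrix. -/
noncomputable def matPow (P : S → S → ℝ) : ℕ → S → S → ℝ
  | 0 => fun s s' => if s = s' then 1 else 0
  | n + 1 => fun s s' => ∑ s'', matPow P n s s'' * P s'' s'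

/-- `part` is a partition of the finite state set `S`. -/
def IsPartition (part : Finset (Finset S)) : Prop :=
  (∀ z ∈ part, z.Nonempty) ∧ (∀ s : S, ∃ z ∈ part, s ∈ z) ∧
  (∀ z ∈ part, ∀ z' ∈ part, z ≠ z' → Disjoint z z')

/-- Abstraction DTMDP of a stochastic matrix w.r.t. a partition: states are
blocks, actions are concrete states, `P̄(z, s, z') = Σ_{s' ∈ z'} P(s,s')` if
`s ∈ z` and `0` otherwise. -/
noncomputable def abst (P : S → S → ℝ) (part : Finset (Finset S)) :
    {z // z ∈ part} → S → {z // z ∈ part} → ℝ :=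
  fun z s z' => if s ∈ z.1 then ∑ s' ∈ z'.1, P s s' else 0


lemma phi_nonneg {lam : ℝ} (h : 0 ≤ lam) (i : ℕ) : 0 ≤ phi lam i := by
  unfold phi
  have := Real.exp_pos (-lam)
  positivity

lemma psi_nonneg {lam : ℝ} (h : 0 ≤ lam) (i : ℕ) : 0 ≤ psi lam i := by
  unfold psi phi
  have h1 : ∑ j ∈ Finset.range (i + 1), lam ^ j / (Nat.factorial j : ℝ) * Real.exp (-lam)
      = (∑ j ∈ Finset.range (i + 1), lam ^ j / (Nat.factorial j : ℝ)) * Real.exp (-lam) := by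
    rw [Finset.sum_mul]
  rw [h1]
  have h2 : (∑ j ∈ Finset.range (i + 1), lam ^ j / (Nat.factorial j : ℝ)) ≤ Real.exp lam :=
    Real.sum_le_exp_of_nonneg h _
  have h3 : (∑ j ∈ Finset.range (i + 1), lam ^ j / (Nat.factorial j : ℝ)) * Real.exp (-lam)
      ≤ Real.exp lam * Real.exp (-lam) :=
    mul_le_mul_of_nonneg_right h2 (Real.exp_pos _).le
  rw [← Real.exp_add, add_neg_cancel, Real.exp_zero] at h3
  linarith

/-- under the refinement correspondence, the coarse maximising
value-iteration vectors dominate the fine ones (`maxVI … k (k+1-i)` is `q'_i`). -/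
theorem stmt3 {S Ac Af : Type} [Fintype S] [DecidableEq S]
    [Fintype Ac] [DecidableEq Ac] [Fintype Af] [DecidableEq Af]
    (partc partf : Finset (Finset S))
    (hpc : IsPartition partc) (hpf : IsPartition partf)
    (href : ∀ z' ∈ partf, ∃ z ∈ partc, z' ⊆ z)
    (Pc : {z // z ∈ partc} → Ac → {z // z ∈ partc} → ℝ) (hPc : IsDTMDP Pc)
    (Pf : {z // z ∈ partf} → Af → {z // z ∈ partf} → ℝ) (hPf : IsDTMDP Pf)
    (cc fc : {z // z ∈ partc} → ℝ) (cf' ff : {z // z ∈ partf} → ℝ)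
    (hcc : ∀ z, 0 ≤ cc z) (hfc : ∀ z, 0 ≤ fc z)
    (hcf : ∀ z, 0 ≤ cf' z) (hff : ∀ z, 0 ≤ ff z)
    (hrew : ∀ (z : {z // z ∈ partc}) (z' : {z // z ∈ partf}), z'.1 ⊆ z.1 →
      cf' z' ≤ cc z ∧ ff z' ≤ fc z)
    (hcorr : ∀ (z : {z // z ∈ partc}) (z' : {z // z ∈ partf}), z'.1 ⊆ z.1 →
      ∀ af, Enabled Pf z' af → ∃ ac, Enabled Pc z ac ∧
        ∀ Z : {z // z ∈ partc},
          Pc z ac Z =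
            ∑ Z' ∈ Finset.univ.filter (fun Z' : {z // z ∈ partf} => Z'.1 ⊆ Z.1),
              Pf z' af Z')
    (q t : ℝ) (hq : 0 < q) (ht : 0 ≤ t) (k : ℕ) :
    ∀ i ≤ k + 1, ∀ (z : {z // z ∈ partc}) (z' : {z // z ∈ partf}), z'.1 ⊆ z.1 →
      maxVI Pf q t cf' ff k (k + 1 - i) z' ≤ maxVI Pc q t cc fc k (k + 1 - i) z := by
  have hlam : 0 ≤ q * t := mul_nonneg hq.le ht
  have hFex : ∀ Z' : {z // z ∈ partf}, ∃ Z : {z // z ∈ partc}, Z'.1 ⊆ Z.1 := by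
    intro Z'
    obtain ⟨Z, hZ, hsub⟩ := href Z'.1 Z'.2
    exact ⟨⟨Z, hZ⟩, hsub⟩
  choose F hFsub using hFex
  have hFuniq : ∀ (Z' : {z // z ∈ partf}) (Z : {z // z ∈ partc}), Z'.1 ⊆ Z.1 → F Z' = Z := by
    intro Z' Z hsub
    by_contra hne
    obtain ⟨s, hs⟩ := hpf.1 Z'.1 Z'.2
    have hdis := hpc.2.2 (F Z').1 (F Z').2 Z.1 Z.2 (fun h => hne (Subtype.ext h))
    exact (Finset.disjoint_left.mp hdis (hFsub Z' hs)) (hsub hs)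
  have key : ∀ j, ∀ (z : {z // z ∈ partc}) (z' : {z // z ∈ partf}), z'.1 ⊆ z.1 →
      maxVI Pf q t cf' ff k j z' ≤ maxVI Pc q t cc fc k j z := by
    intro j
    induction j with
    | zero => intro z z' _; simp [maxVI]
    | succ j ih =>
      intro z z' hsub
      simp only [maxVI]
      have hSup : sSup {x : ℝ | ∃ a, Enabled Pf z' a ∧
          x = ∑ s', Pf z' a s' * maxVI Pf q t cf' ff k j s'} ≤
          sSup {x : ℝ | ∃ a, Enabled Pc z a ∧
          x = ∑ s', Pc z a s' * maxVI Pc q t cc fc k j s'} := by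
        have hbdd : BddAbove {x : ℝ | ∃ a, Enabled Pc z a ∧
            x = ∑ s', Pc z a s' * maxVI Pc q t cc fc k j s'} := by
          apply Set.Finite.bddAbove
          apply Set.Finite.subset (Set.finite_range
            (fun a : Ac => ∑ s', Pc z a s' * maxVI Pc q t cc fc k j s'))
          rintro x ⟨a, _, rfl⟩
          exact ⟨a, rfl⟩
        obtain ⟨af0, haf0⟩ := hPf.2.2 z'
        have hne : ({x : ℝ | ∃ a, Enabled Pf z' a ∧
            x = ∑ s', Pf z' a s' * maxVI Pf q t cf' ff k j s'}).Nonempty :=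
          ⟨_, af0, haf0, rfl⟩
        apply csSup_le hne
        rintro x ⟨af, haf, rfl⟩
        obtain ⟨ac, hac, hPeq⟩ := hcorr z z' hsub af haf
        have hle : (∑ s', Pf z' af s' * maxVI Pf q t cf' ff k j s') ≤
            ∑ Z, Pc z ac Z * maxVI Pc q t cc fc k j Z := by
          calc ∑ s', Pf z' af s' * maxVI Pf q t cf' ff k j s'
              ≤ ∑ s', Pf z' af s' * maxVI Pc q t cc fc k j (F s') := by
                apply Finset.sum_le_sum
                intro Z' _
                exact mul_le_mul_of_nonneg_left (ih (F Z') Z' (hFsub Z')) (hPf.1 _ _ _)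
            _ = ∑ Z, ∑ Z' ∈ Finset.univ.filter (fun Z' => F Z' = Z),
                  Pf z' af Z' * maxVI Pc q t cc fc k j (F Z') := by
                rw [Finset.sum_fiberwise]
            _ = ∑ Z, Pc z ac Z * maxVI Pc q t cc fc k j Z := by
                apply Finset.sum_congr rfl
                intro Z _
                have hrw : Pc z ac Z * maxVI Pc q t cc fc k j Z =
                    ∑ Z' ∈ Finset.univ.filter (fun Z' : {z // z ∈ partf} => F Z' = Z),
                      Pf z' af Z' * maxVI Pc q t cc fc k j Z := by
                  rw [hPeq Z, Finset.sum_mul]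
                  congr 1
                  apply Finset.filter_congr
                  intro Z' _
                  constructor
                  · intro h; exact hFuniq Z' Z h
                  · intro h; exact h ▸ hFsub Z'
                rw [hrw]
                apply Finset.sum_congr rfl
                intro Z' hZ'
                simp only [Finset.mem_filter] at hZ'
                rw [hZ'.2]
        exact le_trans hle (le_csSup hbdd ⟨ac, hac, rfl⟩)
      have h1 := (hrew z z' hsub).2
      have h2 := (hrew z z' hsub).1
      have hdiv : cf' z' / q ≤ cc z / q := by gcongr
      exact add_le_add (add_le_add hSup
        (mul_le_mul_of_nonneg_left h1 (phi_nonneg hlam _)))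
        (mul_le_mul_of_nonneg_left hdiv (psi_nonneg hlam _))
  intro i hi z z' h
  exact key _ z z' h

end TR
end

section
/- Let a finite DTMDP, an initial state s0 and a history-dependent randomised (HR) scheduler σ be given. Then there exists a counting randomised (CR) scheduler σ' such that for every n ∈ ℕ and every state s, the transient probabilities coincide: p_n^{σ'}(s) = tprob^σ(s0, n, s), where p_n^{σ'} is the step-n distribution induced by σ' from s0. -/
open scoped BigOperators

namespace TR

variable {S A : Type} [Fintype S] [Fintype A] [DecidableEq S] [DecidableEq A]

/-- Finset of histories of length `n`. -/
def histFinset (S A : Type) [Fintype S] [Fintype A] [DecidableEq S] [DecidableEq A] :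
    ℕ → Finset (List (S × A))
  | 0 => {([] : List (S × A))}
  | n + 1 => (Finset.univ ×ˢ histFinset S A n).image (fun p => p.1 :: p.2)

lemma hrHistProb_nonneg (P : S → A → S → ℝ) (hP0 : ∀ s a s', 0 ≤ P s a s')
    (sch : List (S × A) × S → A → ℝ) (hs0 : ∀ h a, 0 ≤ sch h a) (s0 : S) :
    ∀ (n : ℕ) (l : List (S × A)) (s : S), 0 ≤ hrHistProb P sch s0 n (l, s) := by
  intro n
  induction n with
  | zero =>
      intro l s
      simp only [hrHistProb]
      split <;> norm_num
  | succ n ih =>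
      rintro (_ | ⟨⟨s1, a⟩, rest⟩) s
      · simp [hrHistProb]
      · exact mul_nonneg (mul_nonneg (ih rest s1) (hs0 (rest, s1) a)) (hP0 s1 a s)

lemma hrHistProb_zero (P : S → A → S → ℝ) (sch : List (S × A) × S → A → ℝ) (s0 : S) :
    ∀ (n : ℕ) (l : List (S × A)) (s : S), l ∉ histFinset S A n →
      hrHistProb P sch s0 n (l, s) = 0 := by
  intro n
  induction n with
  | zero =>
      intro l s hl
      simp only [histFinset, Finset.mem_singleton] at hl
      simp [hrHistProb, hl]
  | succ n ih =>
      rintro (_ | ⟨⟨s1, a⟩, rest⟩) s hl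
      · simp [hrHistProb]
      · have hrest : rest ∉ histFinset S A n := by
          intro hr
          exact hl (by
            simp only [histFinset, Finset.mem_image]
            exact ⟨((s1, a), rest), by simpa using hr, rfl⟩)
        simp [hrHistProb, ih rest s1 hrest]

lemma hrProb_eq_sum (P : S → A → S → ℝ) (sch : List (S × A) × S → A → ℝ)
    (s0 : S) (n : ℕ) (s : S) :
    hrProb P sch s0 n s = ∑ l ∈ histFinset S A n, hrHistProb P sch s0 n (l, s) :=
  tsum_eq_sum (fun l hl => hrHistProb_zero P sch s0 n l s hl)

lemma hist_sum_succ (P : S → A → S → ℝ) (sch : List (S × A) × S → A → ℝ)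
    (s0 : S) (n : ℕ) (s' : S) :
    ∑ l ∈ histFinset S A (n + 1), hrHistProb P sch s0 (n + 1) (l, s') =
      ∑ s, ∑ a, (∑ rest ∈ histFinset S A n,
        hrHistProb P sch s0 n (rest, s) * sch (rest, s) a) * P s a s' := by
  rw [histFinset, Finset.sum_image (by
    intro x _ y _ h
    simp only [List.cons.injEq] at h
    exact Prod.ext h.1 h.2)]
  rw [Finset.sum_product]
  rw [Fintype.sum_prod_type]
  simp_rw [hrHistProb, ← Finset.sum_mul]

/-- every HR scheduler can be mimicked by a CR scheduler with the
same transient probabilities. -/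
theorem stmt5 {S A : Type} [Fintype S] [Fintype A] [DecidableEq S] [DecidableEq A]
    (P : S → A → S → ℝ) (hP : IsDTMDP P) (s0 : S)
    (sch : List (S × A) × S → A → ℝ) (hsch : IsHR P sch) :
    ∃ sch' : S → ℕ → A → ℝ, IsCR P sch' ∧
      ∀ (n : ℕ) (s : S), crProb P sch' s0 n s = hrProb P sch s0 n s := by
  classical
  obtain ⟨hP0, hPsum, hPen⟩ := hP
  obtain ⟨hs0, hs1, hs2⟩ := hsch
  choose d hd using hPen
  set W : ℕ → S → ℝ := fun n s => ∑ l ∈ histFinset S A n, hrHistProb P sch s0 n (l, s)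
    with hWdef
  set num : ℕ → S → A → ℝ := fun n s a =>
    ∑ l ∈ histFinset S A n, hrHistProb P sch s0 n (l, s) * sch (l, s) a with hnumdef
  have hWnn : ∀ n s, 0 ≤ W n s := fun n s =>
    Finset.sum_nonneg fun l _ => hrHistProb_nonneg P hP0 sch hs0 s0 n l s
  have hnumnn : ∀ n s a, 0 ≤ num n s a := fun n s a =>
    Finset.sum_nonneg fun l _ =>
      mul_nonneg (hrHistProb_nonneg P hP0 sch hs0 s0 n l s) (hs0 (l, s) a)
  have hsumnum : ∀ n s, ∑ a, num n s a = W n s := by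
    intro n s
    simp only [hnumdef, hWdef]
    rw [Finset.sum_comm]
    simp_rw [← Finset.mul_sum, hs1, mul_one]
  have hnum_zero : ∀ n s, W n s = 0 → ∀ a, num n s a = 0 := by
    intro n s hw a
    have h0 : ∑ a, num n s a = 0 := by rw [hsumnum n s, hw]
    exact (Finset.sum_eq_zero_iff_of_nonneg (fun a _ => hnumnn n s a)).mp h0 a
      (Finset.mem_univ a)
  set sch' : S → ℕ → A → ℝ := fun s n a =>
    if W n s = 0 then (if a = d s then 1 else 0) else num n s a / W n s with hsch'
  have hmul : ∀ n s a, W n s * sch' s n a = num n s a := by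
    intro n s a
    by_cases hw : W n s = 0
    · simp [hsch', hw, hnum_zero n s hw a]
    · simp only [hsch', if_neg hw]
      field_simp
  refine ⟨sch', ⟨?_, ?_, ?_⟩, ?_⟩
  · intro s n a
    by_cases hw : W n s = 0
    · simp only [hsch', if_pos hw]
      split <;> norm_num
    · simp only [hsch', if_neg hw]
      exact div_nonneg (hnumnn n s a) (hWnn n s)
  · intro s n
    by_cases hw : W n s = 0
    · simp [hsch', hw]
    · simp only [hsch', if_neg hw]
      rw [← Finset.sum_div, hsumnum n s, div_self hw]
  · intro s n a hpos
    by_cases hw : W n s = 0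
    · simp only [hsch', if_pos hw] at hpos
      by_cases ha : a = d s
      · rw [ha]; exact hd s
      · simp [ha] at hpos
    · simp only [hsch', if_neg hw] at hpos
      have hWpos : 0 < W n s := lt_of_le_of_ne (hWnn n s) (Ne.symm hw)
      have hnpos : 0 < num n s a := by
        have := mul_pos hpos hWpos
        rwa [div_mul_cancel₀ _ hw] at this
      have : ∑ l ∈ histFinset S A n, (0 : ℝ) < num n s a := by simpa using hnpos
      obtain ⟨l, _, hlt⟩ := Finset.exists_lt_of_sum_lt this
      have hschpos : 0 < sch (l, s) a := by
        rcases mul_pos_iff.mp hlt with ⟨_, h2⟩ | ⟨h1, _⟩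
        · exact h2
        · exact absurd h1 (not_lt.mpr (hrHistProb_nonneg P hP0 sch hs0 s0 n l s))
      exact hs2 (l, s) a hschpos
  · have key : ∀ n s, crProb P sch' s0 n s = W n s := by
      intro n
      induction n with
      | zero =>
          intro s
          by_cases h : s = s0 <;> simp [crProb, hWdef, histFinset, hrHistProb, h]
      | succ n ih =>
          intro s'
          show (∑ s, crProb P sch' s0 n s * ∑ a, sch' s n a * P s a s') = W (n + 1) s'
          have : ∀ s, crProb P sch' s0 n s * ∑ a, sch' s n a * P s a s'
              = ∑ a, num n s a * P s a s' := by
            intro s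
            rw [ih s, Finset.mul_sum]
            congr 1
            ext a
            rw [← mul_assoc, hmul n s a]
          simp_rw [this]
          exact (hist_sum_succ P sch s0 n s').symm
    intro n s
    rw [key n s, hrProb_eq_sum]

end TR
end
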